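/- arXiv:2104.03052 — 5 statements merged into one kernel-verified Lean document; each statement's English description precedes it below -/
import Mathlib

section
/- Let (M₁,w₁), (M₂,w₂) be pointed Θ-models with Th⁺_BIL(M₁,w₁) ⊆ Th⁺_BIL(M₂,w₂), where both M₁ and M₂ are BIL-saturated. Then the relation A defined by u A s iff Th⁺_BIL(M_i,u) ⊆ Th⁺_BIL(M_j,s) (for u ∈ W_i, s ∈ W_j, {i,j} = {1,2}) is a bi-asimulation from (M₁,w₁) to (M₂,w₂). -/
/-! Common vocabulary for bi-intuitionistic propositional logic (BIL),
Kripke models, bi-asimulations, abstract bi-intuitionistic logics and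
bi-unravellings, following Olkhovikov & Badia,
"Maximality of bi-intuitionistic propositional logic". -/

/-- Formulas of bi-intuitionistic propositional logic over the type `A` of
propositional letters. -/
inductive BILForm (A : Type) : Type
  | bot : BILForm A
  | atom : A → BILForm A
  | conj : BILForm A → BILForm A → BILForm A
  | disj : BILForm A → BILForm A → BILForm A
  | impl : BILForm A → BILForm A → BILForm A
  | coimpl : BILForm A → BILForm A → BILForm A

namespace BILForm

/-- The propositional letters occurring in a formula; a formula belongs to
`BIL(Θ)` iff its letters are contained in `Θ`. -/
def letters {A : Type} : BILForm A → Set A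
  | bot => ∅
  | atom p => {p}
  | conj φ ψ => letters φ ∪ letters ψ
  | disj φ ψ => letters φ ∪ letters ψ
  | impl φ ψ => letters φ ∪ letters ψ
  | coimpl φ ψ => letters φ ∪ letters ψ

end BILForm

/-- A (bi-intuitionistic) Kripke model with propositional letters `A`,
carried on the subset `dom` of the type `Ω`: a nonempty set of worlds,
partially ordered by `rel`, together with a monotone valuation. -/
structure SKModel (A : Type) (Ω : Type) : Type where
  dom : Set Ω
  nonempty : dom.Nonempty
  rel : Ω → Ω → Prop
  rel_mem : ∀ {u v}, rel u v → u ∈ dom ∧ v ∈ dom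
  rel_refl : ∀ u ∈ dom, rel u u
  rel_trans : ∀ {u v w}, rel u v → rel v w → rel u w
  rel_antisymm : ∀ {u v}, rel u v → rel v u → u = v
  val : A → Set Ω
  val_mem : ∀ p, val p ⊆ dom
  val_mono : ∀ (p : A) {u v}, rel u v → u ∈ val p → v ∈ val p

/-- Kripke satisfaction for bi-intuitionistic formulas. -/
def BILSat {A Ω : Type} (M : SKModel A Ω) : BILForm A → Ω → Prop
  | .bot, _ => False
  | .atom p, w => w ∈ M.val p
  | .conj φ ψ, w => BILSat M φ w ∧ BILSat M ψ w
  | .disj φ ψ, w => BILSat M φ w ∨ BILSat M ψ w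
  | .impl φ ψ, w => ∀ v, M.rel w v → BILSat M φ v → BILSat M ψ v
  | .coimpl φ ψ, w => ∃ v, M.rel v w ∧ BILSat M φ v ∧ ¬ BILSat M ψ v

/-- `(Γ, Δ)` is satisfied at `(M, w)`: all of `Γ` true, all of `Δ` false. -/
def BILSatTh {A Ω : Type} (M : SKModel A Ω) (w : Ω) (Γ Δ : Set (BILForm A)) : Prop :=
  (∀ φ ∈ Γ, BILSat M φ w) ∧ (∀ φ ∈ Δ, ¬ BILSat M φ w)

/-- `Th⁺_BIL(M₁,w₁) ⊆ Th⁺_BIL(M₂,w₂)` over the signature `Θ`. -/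
def BILThPosSubset {A Ω₁ Ω₂ : Type} (Θ : Set A) (M₁ : SKModel A Ω₁) (w₁ : Ω₁)
    (M₂ : SKModel A Ω₂) (w₂ : Ω₂) : Prop :=
  ∀ φ : BILForm A, φ.letters ⊆ Θ → BILSat M₁ φ w₁ → BILSat M₂ φ w₂

/-- `Th_BIL(M₁,w₁) = Th_BIL(M₂,w₂)` over the signature `Θ`. -/
def BILThEq {A Ω₁ Ω₂ : Type} (Θ : Set A) (M₁ : SKModel A Ω₁) (w₁ : Ω₁)
    (M₂ : SKModel A Ω₂) (w₂ : Ω₂) : Prop :=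
  ∀ φ : BILForm A, φ.letters ⊆ Θ → (BILSat M₁ φ w₁ ↔ BILSat M₂ φ w₂)

/-- A bi-asimulation (over the signature `Θ`) from `(M₁,w₁)` to `(M₂,w₂)`,
given by its two components `R ⊆ W₁ × W₂` and `S ⊆ W₂ × W₁`. -/
structure IsBiAsim {A Ω₁ Ω₂ : Type} (Θ : Set A) (M₁ : SKModel A Ω₁) (M₂ : SKModel A Ω₂)
    (w₁ : Ω₁) (w₂ : Ω₂) (R : Ω₁ → Ω₂ → Prop) (S : Ω₂ → Ω₁ → Prop) : Prop where
  memR : ∀ {v s}, R v s → v ∈ M₁.dom ∧ s ∈ M₂.dom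
  memS : ∀ {v s}, S v s → v ∈ M₂.dom ∧ s ∈ M₁.dom
  elem : R w₁ w₂
  atomR : ∀ p ∈ Θ, ∀ {v s}, R v s → v ∈ M₁.val p → s ∈ M₂.val p
  atomS : ∀ p ∈ Θ, ∀ {v s}, S v s → v ∈ M₂.val p → s ∈ M₁.val p
  backR : ∀ {v s t}, R v s → M₂.rel s t → ∃ u, M₁.rel v u ∧ S t u ∧ R u t
  backS : ∀ {v s t}, S v s → M₁.rel s t → ∃ u, M₂.rel v u ∧ R t u ∧ S u t
  forthR : ∀ {v s u}, R v s → M₁.rel u v → ∃ t, M₂.rel t s ∧ S t u ∧ R u t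
  forthS : ∀ {v s u}, S v s → M₂.rel u v → ∃ t, M₁.rel t s ∧ R t u ∧ S u t

/-- `M` is a submodel of `N`. -/
def Submodel {A Ω : Type} (M N : SKModel A Ω) : Prop :=
  M.dom ⊆ N.dom ∧ (∀ u ∈ M.dom, ∀ v ∈ M.dom, (M.rel u v ↔ N.rel u v)) ∧
    ∀ p, M.val p = N.val p ∩ M.dom

/-- `U` is the union of the countable chain `Mc` of models. -/
def IsUnionOfChain {A Ω : Type} (Mc : ℕ → SKModel A Ω) (U : SKModel A Ω) : Prop :=
  U.dom = ⋃ n, (Mc n).dom ∧ (∀ u v, U.rel u v ↔ ∃ n, (Mc n).rel u v) ∧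
    ∀ p, U.val p = ⋃ n, (Mc n).val p

/-- `N'` has the same frame as `N` and the same valuation on the letters in
`Θ` (this expresses both `Σ`-expansions and `Σ`-reducts). -/
def IsExpansion {A Ω : Type} (Θ : Set A) (N N' : SKModel A Ω) : Prop :=
  N'.dom = N.dom ∧ (∀ u v, N'.rel u v ↔ N.rel u v) ∧ ∀ p ∈ Θ, N'.val p = N.val p

/-- `M ≼_BIL N` over the signature `Θ`. -/
def BILElemSub {A Ω : Type} (Θ : Set A) (M N : SKModel A Ω) : Prop :=
  Submodel M N ∧ ∀ w ∈ M.dom, ∀ φ : BILForm A, φ.letters ⊆ Θ →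
    (BILSat M φ w ↔ BILSat N φ w)

/-- `(Γ,Δ)` is a successor BIL-type of `(M,v)` (over the signature `Θ`). -/
def BILSuccType {A Ω : Type} (Θ : Set A) (M : SKModel A Ω) (v : Ω)
    (Γ Δ : Set (BILForm A)) : Prop :=
  (∀ φ ∈ Γ, BILForm.letters φ ⊆ Θ) ∧ (∀ φ ∈ Δ, BILForm.letters φ ⊆ Θ) ∧
    ∀ Γ' ⊆ Γ, ∀ Δ' ⊆ Δ, Γ'.Finite → Δ'.Finite →
      ∃ u, M.rel v u ∧ BILSatTh M u Γ' Δ'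

/-- `(Γ,Δ)` is a predecessor BIL-type of `(M,v)` (over the signature `Θ`). -/
def BILPredType {A Ω : Type} (Θ : Set A) (M : SKModel A Ω) (v : Ω)
    (Γ Δ : Set (BILForm A)) : Prop :=
  (∀ φ ∈ Γ, BILForm.letters φ ⊆ Θ) ∧ (∀ φ ∈ Δ, BILForm.letters φ ⊆ Θ) ∧
    ∀ Γ' ⊆ Γ, ∀ Δ' ⊆ Δ, Γ'.Finite → Δ'.Finite →
      ∃ u, M.rel u v ∧ BILSatTh M u Γ' Δ'

/-- `M` is BIL-saturated (over the signature `Θ`): it realizes all of its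
successor and predecessor BIL-types. -/
def BILSaturated {A Ω : Type} (Θ : Set A) (M : SKModel A Ω) : Prop :=
  ∀ v ∈ M.dom, ∀ Γ Δ : Set (BILForm A),
    (BILSuccType Θ M v Γ Δ → ∃ u, M.rel v u ∧ BILSatTh M u Γ Δ) ∧
    (BILPredType Θ M v Γ Δ → ∃ u, M.rel u v ∧ BILSatTh M u Γ Δ)

/-- An isomorphism `g` of Kripke `Θ`-models from `M` onto `N`. -/
def BILIso {A Ω₁ Ω₂ : Type} (Θ : Set A) (M : SKModel A Ω₁) (N : SKModel A Ω₂)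
    (g : Ω₁ → Ω₂) : Prop :=
  Set.InjOn g M.dom ∧ g '' M.dom = N.dom ∧
  (∀ u ∈ M.dom, ∀ v ∈ M.dom, (M.rel u v ↔ N.rel (g u) (g v))) ∧
  (∀ p ∈ Θ, ∀ u ∈ M.dom, (u ∈ M.val p ↔ g u ∈ N.val p))

/-- An abstract bi-intuitionistic logic over the propositional letters `A`:
a set `In Θ` of `Θ`-formulas for every signature `Θ ⊆ A`, and a satisfaction
relation enjoying the Isomorphism, Expansion, Occurrence and Closure
properties. -/
structure AbsLogic (A : Type) : Type 1 where
  F : Type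
  In : Set A → Set F
  Sat : ∀ {Ω : Type}, SKModel A Ω → Ω → F → Prop
  in_mono : ∀ {Θ Θ' : Set A}, Θ ⊆ Θ' → In Θ ⊆ In Θ'
  iso_invariant : ∀ (Θ : Set A) {Ω₁ Ω₂ : Type} (M : SKModel A Ω₁) (N : SKModel A Ω₂)
      (g : Ω₁ → Ω₂), BILIso Θ M N g →
      ∀ φ ∈ In Θ, ∀ w ∈ M.dom, (Sat M w φ ↔ Sat N (g w) φ)
  expansion : ∀ (Θ : Set A) {Ω : Type} (M M' : SKModel A Ω), M.dom = M'.dom →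
      (∀ u v, M.rel u v ↔ M'.rel u v) → (∀ p ∈ Θ, M.val p = M'.val p) →
      ∀ φ ∈ In Θ, ∀ w, (Sat M w φ ↔ Sat M' w φ)
  occurrence : ∀ (Θ : Set A) (φ : F), φ ∈ In Θ →
      ∃ Θ₀ : Set A, Θ₀.Finite ∧ Θ₀ ⊆ Θ ∧ φ ∈ In Θ₀
  fbot : F
  fconj : F → F → F
  fdisj : F → F → F
  fimpl : F → F → F
  fcoimpl : F → F → F
  mem_bot : ∀ Θ, fbot ∈ In Θ
  mem_conj : ∀ {Θ φ ψ}, φ ∈ In Θ → ψ ∈ In Θ → fconj φ ψ ∈ In Θ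
  mem_disj : ∀ {Θ φ ψ}, φ ∈ In Θ → ψ ∈ In Θ → fdisj φ ψ ∈ In Θ
  mem_impl : ∀ {Θ φ ψ}, φ ∈ In Θ → ψ ∈ In Θ → fimpl φ ψ ∈ In Θ
  mem_coimpl : ∀ {Θ φ ψ}, φ ∈ In Θ → ψ ∈ In Θ → fcoimpl φ ψ ∈ In Θ
  sat_bot : ∀ {Ω : Type} (M : SKModel A Ω) (w : Ω), ¬ Sat M w fbot
  sat_conj : ∀ {Ω : Type} (M : SKModel A Ω) (w : Ω) (φ ψ : F),
      Sat M w (fconj φ ψ) ↔ (Sat M w φ ∧ Sat M w ψ)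
  sat_disj : ∀ {Ω : Type} (M : SKModel A Ω) (w : Ω) (φ ψ : F),
      Sat M w (fdisj φ ψ) ↔ (Sat M w φ ∨ Sat M w ψ)
  sat_impl : ∀ {Ω : Type} (M : SKModel A Ω) (w : Ω) (φ ψ : F),
      Sat M w (fimpl φ ψ) ↔ ∀ v, M.rel w v → Sat M v φ → Sat M v ψ
  sat_coimpl : ∀ {Ω : Type} (M : SKModel A Ω) (w : Ω) (φ ψ : F),
      Sat M w (fcoimpl φ ψ) ↔ ∃ v, M.rel v w ∧ Sat M v φ ∧ ¬ Sat M v ψ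

namespace AbsLogic

variable {A : Type}

/-- The `L`-theory `(Γ,Δ)` is satisfied at `(M,w)`. -/
def SatTh (L : AbsLogic A) {Ω : Type} (M : SKModel A Ω) (w : Ω) (Γ Δ : Set L.F) : Prop :=
  (∀ φ ∈ Γ, L.Sat M w φ) ∧ (∀ φ ∈ Δ, ¬ L.Sat M w φ)

/-- `Th⁺_L(M₁,w₁) ⊆ Th⁺_L(M₂,w₂)` over the signature `Θ`. -/
def ThPosSubset (L : AbsLogic A) (Θ : Set A) {Ω₁ Ω₂ : Type} (M₁ : SKModel A Ω₁) (w₁ : Ω₁)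
    (M₂ : SKModel A Ω₂) (w₂ : Ω₂) : Prop :=
  ∀ φ ∈ L.In Θ, L.Sat M₁ w₁ φ → L.Sat M₂ w₂ φ

/-- `Th_L(M₁,w₁) = Th_L(M₂,w₂)` over the signature `Θ`. -/
def ThEq (L : AbsLogic A) (Θ : Set A) {Ω₁ Ω₂ : Type} (M₁ : SKModel A Ω₁) (w₁ : Ω₁)
    (M₂ : SKModel A Ω₂) (w₂ : Ω₂) : Prop :=
  ∀ φ ∈ L.In Θ, (L.Sat M₁ w₁ φ ↔ L.Sat M₂ w₂ φ)

/-- `L` is preserved under bi-asimulations. -/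
def Preserved (L : AbsLogic A) : Prop :=
  ∀ (Θ : Set A) (Ω₁ Ω₂ : Type) (M₁ : SKModel A Ω₁) (M₂ : SKModel A Ω₂)
    (w₁ : Ω₁) (w₂ : Ω₂) (R : Ω₁ → Ω₂ → Prop) (S : Ω₂ → Ω₁ → Prop),
    IsBiAsim Θ M₁ M₂ w₁ w₂ R S → L.ThPosSubset Θ M₁ w₁ M₂ w₂

/-- `L` is ★-compact. -/
def StarCompact (L : AbsLogic A) : Prop :=
  ∀ (Θ : Set A) (Γ Δ : Set L.F), Γ ⊆ L.In Θ → Δ ⊆ L.In Θ →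
    (∀ Γ' ⊆ Γ, ∀ Δ' ⊆ Δ, Γ'.Finite → Δ'.Finite →
      ∃ (Ω : Type) (M : SKModel A Ω) (w : Ω), w ∈ M.dom ∧ L.SatTh M w Γ' Δ') →
    ∃ (Ω : Type) (M : SKModel A Ω) (w : Ω), w ∈ M.dom ∧ L.SatTh M w Γ Δ

/-- `M ≼_L N` over the signature `Θ`. -/
def ElemSub (L : AbsLogic A) (Θ : Set A) {Ω : Type} (M N : SKModel A Ω) : Prop :=
  Submodel M N ∧ ∀ w ∈ M.dom, ∀ φ ∈ L.In Θ, (L.Sat M w φ ↔ L.Sat N w φ)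

/-- `L` has the Tarski Union Property. -/
def HasTUP (L : AbsLogic A) : Prop :=
  ∀ (Θ : Set A) (Ω : Type) (Mc : ℕ → SKModel A Ω),
    (∀ n, L.ElemSub Θ (Mc n) (Mc (n + 1))) →
    ∀ U : SKModel A Ω, IsUnionOfChain Mc U → ∀ n, L.ElemSub Θ (Mc n) U

/-- `(Γ,Δ)` is a successor `L`-type of `(M,v)` (over the signature `Θ`). -/
def SuccType (L : AbsLogic A) (Θ : Set A) {Ω : Type} (M : SKModel A Ω) (v : Ω)
    (Γ Δ : Set L.F) : Prop :=
  Γ ⊆ L.In Θ ∧ Δ ⊆ L.In Θ ∧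
    ∀ Γ' ⊆ Γ, ∀ Δ' ⊆ Δ, Γ'.Finite → Δ'.Finite →
      ∃ u, M.rel v u ∧ L.SatTh M u Γ' Δ'

/-- `(Γ,Δ)` is a predecessor `L`-type of `(M,v)` (over the signature `Θ`). -/
def PredType (L : AbsLogic A) (Θ : Set A) {Ω : Type} (M : SKModel A Ω) (v : Ω)
    (Γ Δ : Set L.F) : Prop :=
  Γ ⊆ L.In Θ ∧ Δ ⊆ L.In Θ ∧
    ∀ Γ' ⊆ Γ, ∀ Δ' ⊆ Δ, Γ'.Finite → Δ'.Finite →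
      ∃ u, M.rel u v ∧ L.SatTh M u Γ' Δ'

/-- `M` is `L`-saturated (over the signature `Θ`). -/
def Saturated (L : AbsLogic A) (Θ : Set A) {Ω : Type} (M : SKModel A Ω) : Prop :=
  ∀ v ∈ M.dom, ∀ Γ Δ : Set L.F,
    (L.SuccType Θ M v Γ Δ → ∃ u, M.rel v u ∧ L.SatTh M u Γ Δ) ∧
    (L.PredType Θ M v Γ Δ → ∃ u, M.rel u v ∧ L.SatTh M u Γ Δ)

/-- An `L`-elementary embedding of `M` into `N` (over the signature `Θ`). -/
def ElemEmbedding (L : AbsLogic A) (Θ : Set A) {Ω₁ Ω₂ : Type}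
    (M : SKModel A Ω₁) (N : SKModel A Ω₂) (f : Ω₁ → Ω₂) : Prop :=
  Set.InjOn f M.dom ∧ Set.MapsTo f M.dom N.dom ∧
  (∀ u ∈ M.dom, ∀ v ∈ M.dom, (M.rel u v ↔ N.rel (f u) (f v))) ∧
  (∀ u ∈ M.dom, ∀ φ ∈ L.In Θ, (L.Sat M u φ ↔ L.Sat N (f u) φ))

end AbsLogic

/-- An abstract bi-intuitionistic logic extending `BIL`: bi-intuitionistic
formulas are present in it in their usual form and with their usual meaning. -/
structure BILExtension (A : Type) extends AbsLogic A where
  ofBIL : BILForm A → F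
  ofBIL_mem : ∀ (Θ : Set A) (φ : BILForm A), φ.letters ⊆ Θ → ofBIL φ ∈ In Θ
  ofBIL_bot : ofBIL .bot = fbot
  ofBIL_conj : ∀ φ ψ, ofBIL (.conj φ ψ) = fconj (ofBIL φ) (ofBIL ψ)
  ofBIL_disj : ∀ φ ψ, ofBIL (.disj φ ψ) = fdisj (ofBIL φ) (ofBIL ψ)
  ofBIL_impl : ∀ φ ψ, ofBIL (.impl φ ψ) = fimpl (ofBIL φ) (ofBIL ψ)
  ofBIL_coimpl : ∀ φ ψ, ofBIL (.coimpl φ ψ) = fcoimpl (ofBIL φ) (ofBIL ψ)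
  sat_ofBIL : ∀ {Ω : Type} (M : SKModel A Ω) (w : Ω) (φ : BILForm A),
      Sat M w (ofBIL φ) ↔ BILSat M φ w

/-! ### Bi-unravellings -/

/-- The universe `W^un_w` of the bi-unravelling of `M` around `w`: finite
nonempty sequences starting at `w` whose consecutive elements are
`≺`- or `≻`-related and distinct. -/
def unravDom {A Ω : Type} (M : SKModel A Ω) (w : Ω) : Set (List Ω) :=
  {l | l ≠ [] ∧ l.head? = some w ∧ (∀ x ∈ l, x ∈ M.dom) ∧
    l.Chain' (fun u v => (M.rel u v ∨ M.rel v u) ∧ u ≠ v)}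

/-- The one-step relation `ρ^un_w` of the bi-unravelling. -/
def unravStep {A Ω : Type} (M : SKModel A Ω) (w : Ω) (s t : List Ω) : Prop :=
  s ∈ unravDom M w ∧ t ∈ unravDom M w ∧
    ((∃ x y, s.getLast? = some y ∧ t = s ++ [x] ∧ M.rel y x) ∨
     (∃ x y, t.getLast? = some y ∧ s = t ++ [x] ∧ M.rel x y))

/-- The accessibility relation `≺^un_w` of the bi-unravelling: the reflexive
and transitive closure of `ρ^un_w`. -/
def unravRel {A Ω : Type} (M : SKModel A Ω) (w : Ω) : List Ω → List Ω → Prop :=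
  Relation.ReflTransGen (unravStep M w)

/-- The valuation `V^un_w` of the bi-unravelling: a sequence satisfies a
letter iff its last element does. -/
def unravVal {A Ω : Type} (M : SKModel A Ω) (w : Ω) (p : A) : Set (List Ω) :=
  {l | l ∈ unravDom M w ∧ ∃ y, l.getLast? = some y ∧ y ∈ M.val p}

/-- `U` is (a presentation of) the bi-unravelling `M^un_w` of `M` around `w`. -/
def IsUnravelling {A Ω : Type} (M : SKModel A Ω) (w : Ω) (U : SKModel A (List Ω)) : Prop :=
  U.dom = unravDom M w ∧
  (∀ α β, U.rel α β ↔ (α ∈ unravDom M w ∧ β ∈ unravDom M w ∧ unravRel M w α β)) ∧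
  (∀ p, U.val p = unravVal M w p)

/-- `M` is a bi-unravelled model presented in the canonical form: its frame is
literally the bi-unravelling frame of `M₀` around `w₀` (the valuation of `M`
is arbitrary). -/
def IsBiUnravelledForm {A Ω : Type} (M₀ : SKModel A Ω) (w₀ : Ω)
    (M : SKModel A (List Ω)) : Prop :=
  M.dom = unravDom M₀ w₀ ∧
  (∀ α β, M.rel α β ↔ (α ∈ unravDom M₀ w₀ ∧ β ∈ unravDom M₀ w₀ ∧ unravRel M₀ w₀ α β))

/-- `(N,v)` is a bi-unravelled pointed model: its underlying frame is
isomorphic, via a point-preserving order-respecting bijection, to the frame of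
some bi-unravelling. -/
def IsBiUnravelled {A Ω' : Type} (N : SKModel A Ω') (v : Ω') : Prop :=
  ∃ (Ω₀ : Type) (M₀ : SKModel A Ω₀) (w₀ : Ω₀), w₀ ∈ M₀.dom ∧
    ∃ g : Ω' → List Ω₀, Set.InjOn g N.dom ∧ g '' N.dom = unravDom M₀ w₀ ∧ g v = [w₀] ∧
      ∀ x ∈ N.dom, ∀ y ∈ N.dom, (N.rel x y ↔ unravRel M₀ w₀ (g x) (g y))

/-- `qp` and `qm` provide the fresh letters `q⁺_α`, `q⁻_α` (for `α ∈ D`)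
used to form the signature `Θ_M`. -/
def FreshLetters {A Ω : Type} (Θ : Set A) (D : Set Ω) (qp qm : Ω → A) : Prop :=
  Set.InjOn qp D ∧ Set.InjOn qm D ∧
  (∀ α ∈ D, qp α ∉ Θ) ∧ (∀ α ∈ D, qm α ∉ Θ) ∧
  (∀ α ∈ D, ∀ β ∈ D, qp α ≠ qm β)

/-- The signature `Θ_M = Θ ∪ {q⁺_α, q⁻_α : α ∈ D}`. -/
def bracketSig {A Ω : Type} (Θ : Set A) (D : Set Ω) (qp qm : Ω → A) : Set A :=
  Θ ∪ qp '' D ∪ qm '' D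

/-- `Mb` is the model `[M]`: same frame as `M`, same valuation on `Θ`, and
`β ∈ [V](q⁺_α) ↔ α ≺ β`, `β ∉ [V](q⁻_α) ↔ β ≺ α`. -/
def IsBracket {A Ω : Type} (Θ : Set A) (qp qm : Ω → A) (M Mb : SKModel A Ω) : Prop :=
  Mb.dom = M.dom ∧ (∀ u v, Mb.rel u v ↔ M.rel u v) ∧
  (∀ p ∈ Θ, Mb.val p = M.val p) ∧
  (∀ α ∈ M.dom, Mb.val (qp α) = {β | M.rel α β}) ∧
  (∀ α ∈ M.dom, Mb.val (qm α) = {β | β ∈ M.dom ∧ ¬ M.rel β α})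

/-! ### Formula schemas -/

/-- Binary formula schemas: expressions built from two placeholders and
propositional letters by `→` and `≪`. -/
inductive BILSchema (A : Type) : Type
  | v1 : BILSchema A
  | v2 : BILSchema A
  | atom : A → BILSchema A
  | impl : BILSchema A → BILSchema A → BILSchema A
  | coimpl : BILSchema A → BILSchema A → BILSchema A

namespace BILSchema

/-- The letters occurring in a schema. -/
def letters {A : Type} : BILSchema A → Set A
  | v1 => ∅
  | v2 => ∅
  | atom p => {p}
  | impl s t => letters s ∪ letters t
  | coimpl s t => letters s ∪ letters t

/-- Evaluation of a schema in an abstract logic `L` extending `BIL`, on a pair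
of `L`-formulas. -/
def eval {A : Type} (L : BILExtension A) : BILSchema A → L.F → L.F → L.F
  | v1, α, _ => α
  | v2, _, β => β
  | atom p, _, _ => L.ofBIL (.atom p)
  | impl s t, α, β => L.fimpl (eval L s α β) (eval L t α β)
  | coimpl s t, α, β => L.fcoimpl (eval L s α β) (eval L t α β)

end BILSchema

/-- `signSat b P` says that `P` holds if the sign `b` is `+` (`true`), and
that `P` fails if the sign is `−` (`false`). -/
def signSat (b : Bool) (P : Prop) : Prop := if b then P else ¬ P

/-- Iterated conjunction, with `⋀ ∅ := ⊥ → ⊥`. -/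
def bigConj {A : Type} : List (BILForm A) → BILForm A
  | [] => .impl .bot .bot
  | φ :: l => .conj φ (bigConj l)

/-- Iterated disjunction, with `⋁ ∅ := ⊥`. -/
def bigDisj {A : Type} : List (BILForm A) → BILForm A
  | [] => .bot
  | φ :: l => .disj φ (bigDisj l)

/-- `N` realizes (over the signature `Θ`) every BIL-type of its submodel `M`. -/
def BILRealizesTypesIn {A Ω : Type} (Θ : Set A) (M N : SKModel A Ω) : Prop :=
  ∀ v ∈ M.dom, ∀ Γ Δ : Set (BILForm A),
    (BILSuccType Θ M v Γ Δ → ∃ u, N.rel v u ∧ BILSatTh N u Γ Δ) ∧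
    (BILPredType Θ M v Γ Δ → ∃ u, N.rel u v ∧ BILSatTh N u Γ Δ)


/-! The inclusion of positive theories is a bi-asimulation because a finite piece `(Γ', Δ')` of
the theory of a successor `t` of `s` is witnessed at `s` by the failure of `⋀Γ' → ⋁Δ'`, and a
finite piece of the theory of a predecessor `u` of `v` by the truth of `⋀Γ' ≪ ⋁Δ'` at `v`.
Inclusion of positive theories transfers these facts to the other model, so the corresponding
successor or predecessor type is finitely satisfiable there, and saturation realizes it. -/

namespace BILForm

variable {A : Type} {Θ : Set A}

theorem exists_sat_iff_forall_of_finite {Γ : Set (BILForm A)} (hΓ : Γ.Finite)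
    (hΘ : ∀ φ ∈ Γ, φ.letters ⊆ Θ) :
    ∃ γ : BILForm A, γ.letters ⊆ Θ ∧
      ∀ {Ω : Type} (M : SKModel A Ω) (w : Ω), BILSat M γ w ↔ ∀ φ ∈ Γ, BILSat M φ w := by
  induction Γ, hΓ using Set.Finite.induction_on with
  | empty => exact ⟨.impl .bot .bot, by simp [letters], fun M w => by simp [BILSat]⟩
  | @insert φ Γ _ _ ih =>
    obtain ⟨γ, hγΘ, hγ⟩ := ih fun ψ hψ => hΘ ψ (Set.mem_insert_of_mem φ hψ)
    refine ⟨.conj φ γ, Set.union_subset (hΘ φ (Set.mem_insert φ Γ)) hγΘ, fun M w => ?_⟩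
    simp [BILSat, hγ]

theorem exists_sat_iff_exists_of_finite {Δ : Set (BILForm A)} (hΔ : Δ.Finite)
    (hΘ : ∀ φ ∈ Δ, φ.letters ⊆ Θ) :
    ∃ δ : BILForm A, δ.letters ⊆ Θ ∧
      ∀ {Ω : Type} (M : SKModel A Ω) (w : Ω), BILSat M δ w ↔ ∃ φ ∈ Δ, BILSat M φ w := by
  induction Δ, hΔ using Set.Finite.induction_on with
  | empty => exact ⟨.bot, by simp [letters], fun M w => by simp [BILSat]⟩
  | @insert φ Δ _ _ ih =>
    obtain ⟨δ, hδΘ, hδ⟩ := ih fun ψ hψ => hΘ ψ (Set.mem_insert_of_mem φ hψ)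
    refine ⟨.disj φ δ, Set.union_subset (hΘ φ (Set.mem_insert φ Δ)) hδΘ, fun M w => ?_⟩
    simp [BILSat, hδ]

theorem exists_satTh_iff_of_finite {Γ Δ : Set (BILForm A)} (hΓ : Γ.Finite) (hΔ : Δ.Finite)
    (hΓΘ : ∀ φ ∈ Γ, φ.letters ⊆ Θ) (hΔΘ : ∀ φ ∈ Δ, φ.letters ⊆ Θ) :
    ∃ γ δ : BILForm A, γ.letters ⊆ Θ ∧ δ.letters ⊆ Θ ∧
      ∀ {Ω : Type} (M : SKModel A Ω) (w : Ω),
        BILSatTh M w Γ Δ ↔ BILSat M γ w ∧ ¬ BILSat M δ w := by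
  obtain ⟨γ, hγΘ, hγ⟩ := exists_sat_iff_forall_of_finite hΓ hΓΘ
  obtain ⟨δ, hδΘ, hδ⟩ := exists_sat_iff_exists_of_finite hΔ hΔΘ
  exact ⟨γ, δ, hγΘ, hδΘ, fun M w => by simp [BILSatTh, hγ, hδ]⟩

end BILForm

section Asimulation

variable {A Ω Ω' : Type} {Θ : Set A} {M : SKModel A Ω} {N : SKModel A Ω'}

def BILPosTh (Θ : Set A) (M : SKModel A Ω) (t : Ω) : Set (BILForm A) :=
  {φ | φ.letters ⊆ Θ ∧ BILSat M φ t}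

def BILNegTh (Θ : Set A) (M : SKModel A Ω) (t : Ω) : Set (BILForm A) :=
  {φ | φ.letters ⊆ Θ ∧ ¬ BILSat M φ t}

theorem BILSatTh.thPosSubset_posTh_negTh {t : Ω} {u : Ω'}
    (h : BILSatTh N u (BILPosTh Θ M t) (BILNegTh Θ M t)) :
    BILThPosSubset Θ M t N u ∧ BILThPosSubset Θ N u M t :=
  ⟨fun φ hφΘ hφ => h.1 φ ⟨hφΘ, hφ⟩,
    fun φ hφΘ hφ => by_contra fun hnφ => h.2 φ ⟨hφΘ, hnφ⟩ hφ⟩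

theorem bilSuccType_posTh_negTh {v : Ω'} {s t : Ω} (hvs : BILThPosSubset Θ N v M s)
    (hst : M.rel s t) : BILSuccType Θ N v (BILPosTh Θ M t) (BILNegTh Θ M t) := by
  refine ⟨fun φ hφ => hφ.1, fun φ hφ => hφ.1, fun Γ hΓ Δ hΔ hΓf hΔf => ?_⟩
  obtain ⟨γ, δ, hγΘ, hδΘ, hγδ⟩ :=
    BILForm.exists_satTh_iff_of_finite hΓf hΔf (fun φ hφ => (hΓ hφ).1) (fun φ hφ => (hΔ hφ).1)
  obtain ⟨hγt, hδt⟩ := (hγδ M t).1 ⟨fun φ hφ => (hΓ hφ).2, fun φ hφ => (hΔ hφ).2⟩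
  have hs : ¬ BILSat M (.impl γ δ) s := fun hs => hδt (hs t hst hγt)
  have hv : ¬ BILSat N (.impl γ δ) v := fun hv => hs (hvs (.impl γ δ) (Set.union_subset hγΘ hδΘ) hv)
  simp only [BILSat, not_forall] at hv
  obtain ⟨u, hvu, hγ, hδ⟩ := hv
  exact ⟨u, hvu, (hγδ N u).2 ⟨hγ, hδ⟩⟩

theorem bilPredType_posTh_negTh {v u : Ω} {s : Ω'} (hvs : BILThPosSubset Θ M v N s)
    (huv : M.rel u v) : BILPredType Θ N s (BILPosTh Θ M u) (BILNegTh Θ M u) := by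
  refine ⟨fun φ hφ => hφ.1, fun φ hφ => hφ.1, fun Γ hΓ Δ hΔ hΓf hΔf => ?_⟩
  obtain ⟨γ, δ, hγΘ, hδΘ, hγδ⟩ :=
    BILForm.exists_satTh_iff_of_finite hΓf hΔf (fun φ hφ => (hΓ hφ).1) (fun φ hφ => (hΔ hφ).1)
  have hv : BILSat M (.coimpl γ δ) v :=
    ⟨u, huv, (hγδ M u).1 ⟨fun φ hφ => (hΓ hφ).2, fun φ hφ => (hΔ hφ).2⟩⟩
  obtain ⟨t, hts, hγ, hδ⟩ := hvs (.coimpl γ δ) (Set.union_subset hγΘ hδΘ) hv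
  exact ⟨t, hts, (hγδ N t).2 ⟨hγ, hδ⟩⟩

theorem BILSaturated.exists_succ_of_thPosSubset (hN : BILSaturated Θ N) {v : Ω'} {s t : Ω}
    (hv : v ∈ N.dom) (hvs : BILThPosSubset Θ N v M s) (hst : M.rel s t) :
    ∃ u, N.rel v u ∧ BILThPosSubset Θ M t N u ∧ BILThPosSubset Θ N u M t := by
  obtain ⟨u, hvu, hu⟩ := (hN v hv _ _).1 (bilSuccType_posTh_negTh hvs hst)
  exact ⟨u, hvu, hu.thPosSubset_posTh_negTh⟩

theorem BILSaturated.exists_pred_of_thPosSubset (hN : BILSaturated Θ N) {v u : Ω} {s : Ω'}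
    (hs : s ∈ N.dom) (hvs : BILThPosSubset Θ M v N s) (huv : M.rel u v) :
    ∃ t, N.rel t s ∧ BILThPosSubset Θ M u N t ∧ BILThPosSubset Θ N t M u := by
  obtain ⟨t, hts, ht⟩ := (hN s hs _ _).2 (bilPredType_posTh_negTh hvs huv)
  exact ⟨t, hts, ht.thPosSubset_posTh_negTh⟩

theorem BILThPosSubset.atom {v : Ω} {s : Ω'}
    (h : BILThPosSubset Θ M v N s) {p : A} (hp : p ∈ Θ) (hv : v ∈ M.val p) : s ∈ N.val p :=
  h (.atom p) (Set.singleton_subset_iff.2 hp) hv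

end Asimulation

/-- Lemma 3.2. Let `(M₁,w₁)`, `(M₂,w₂)` be pointed
`Θ`-models with `Th⁺_BIL(M₁,w₁) ⊆ Th⁺_BIL(M₂,w₂)`, both BIL-saturated. Then
the relation defined by inclusion of positive BIL-theories is a
bi-asimulation from `(M₁,w₁)` to `(M₂,w₂)`. -/
theorem bil_asimulation_lemma (A : Type)
    (Θ : Set A) (Ω₁ Ω₂ : Type) (M₁ : SKModel A Ω₁) (M₂ : SKModel A Ω₂)
    (w₁ : Ω₁) (w₂ : Ω₂) (hw₁ : w₁ ∈ M₁.dom) (hw₂ : w₂ ∈ M₂.dom)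
    (hsub : BILThPosSubset Θ M₁ w₁ M₂ w₂)
    (hsat₁ : BILSaturated Θ M₁) (hsat₂ : BILSaturated Θ M₂) :
    IsBiAsim Θ M₁ M₂ w₁ w₂
      (fun u s => u ∈ M₁.dom ∧ s ∈ M₂.dom ∧ BILThPosSubset Θ M₁ u M₂ s)
      (fun u s => u ∈ M₂.dom ∧ s ∈ M₁.dom ∧ BILThPosSubset Θ M₂ u M₁ s) := by
  refine
    { memR := fun h => ⟨h.1, h.2.1⟩
      memS := fun h => ⟨h.1, h.2.1⟩
      elem := ⟨hw₁, hw₂, hsub⟩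
      atomR := fun _ hp _ _ h => h.2.2.atom hp
      atomS := fun _ hp _ _ h => h.2.2.atom hp
      backR := ?_, backS := ?_, forthR := ?_, forthS := ?_ }
  · rintro v s t ⟨hv, -, hvs⟩ hst
    obtain ⟨u, hvu, htu, hut⟩ := hsat₁.exists_succ_of_thPosSubset hv hvs hst
    have hu := (M₁.rel_mem hvu).2
    have ht := (M₂.rel_mem hst).2
    exact ⟨u, hvu, ⟨ht, hu, htu⟩, hu, ht, hut⟩
  · rintro v s t ⟨hv, -, hvs⟩ hst
    obtain ⟨u, hvu, htu, hut⟩ := hsat₂.exists_succ_of_thPosSubset hv hvs hst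
    have hu := (M₂.rel_mem hvu).2
    have ht := (M₁.rel_mem hst).2
    exact ⟨u, hvu, ⟨ht, hu, htu⟩, hu, ht, hut⟩
  · rintro v s u ⟨-, hs, hvs⟩ huv
    obtain ⟨t, hts, hut, htu⟩ := hsat₂.exists_pred_of_thPosSubset hs hvs huv
    have hu := (M₁.rel_mem huv).1
    have ht := (M₂.rel_mem hts).1
    exact ⟨t, hts, ⟨ht, hu, htu⟩, hu, ht, hut⟩
  · rintro v s u ⟨-, hs, hvs⟩ huv
    obtain ⟨t, hts, hut, htu⟩ := hsat₁.exists_pred_of_thPosSubset hs hvs huv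
    have hu := (M₂.rel_mem huv).1
    have ht := (M₁.rel_mem hts).1
    exact ⟨t, hts, ⟨ht, hu, htu⟩, hu, ht, hut⟩
end

section
/- Let (M,w) be a pointed Θ-model, let k > 0, and let α₁,…,α_k ∈ W^un_w be pairwise distinct with α_i ρ^un_w α_{i+1} for all i < k. Then there exist m, n ≥ 0 with k = m + n + 1 and sequences v₁,…,v_m and u₁,…,u_n in W such that v_m ≺ … ≺ v₁ ≺ end(α_{m+1}) ≺ u₁ ≺ … ≺ u_n, and: α_i = α_{m+1}⌢(v₁,…,v_{m−i+1}) for all 1 ≤ i ≤ m, and α_{m+1+i} = α_{m+1}⌢(u₁,…,u_i) for all 1 ≤ i ≤ n. -/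
/-! In a chain of pairwise distinct sequences an extension step can never be followed by
a retraction: `α_{i+1} = α_i ⌢ (x)` and `α_{i+1} = α_{i+2} ⌢ (y)` would force
`α_i = α_{i+2}`. Hence the chain first shrinks for `m` steps down to its shortest member
`α_{m+1}` and then grows for `n` steps; the elements dropped on the way down are the `v`'s,
those appended on the way up are the `u`'s. -/

theorem exists_split_of_succ_closed (P : ℕ → Prop) (n : ℕ)
    (hP : ∀ i, i + 1 < n → P i → P (i + 1)) :
    ∃ m ≤ n, (∀ i < m, ¬ P i) ∧ ∀ i, m ≤ i → i < n → P i := by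
  induction n with
  | zero => exact ⟨0, le_rfl, by simp, by simp⟩
  | succ n ih =>
    obtain ⟨m, hmn, hbelow, habove⟩ := ih fun i hi => hP i (by omega)
    rcases hmn.lt_or_eq with hlt | rfl
    · have hn : P n := by
        obtain ⟨j, rfl⟩ : ∃ j, n = j + 1 := ⟨n - 1, by omega⟩
        exact hP j (by omega) (habove j (by omega) (by omega))
      exact ⟨m, by omega, hbelow, fun i hmi hi => (Nat.lt_succ_iff_lt_or_eq.1 hi).elim
        (habove i hmi) (· ▸ hn)⟩
    · by_cases hm : P m
      · exact ⟨m, by omega, hbelow, fun i hmi hi => by rwa [show i = m by omega]⟩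
      · exact ⟨m + 1, le_rfl, fun i hi => (Nat.lt_succ_iff_lt_or_eq.1 hi).elim
          (hbelow i) (· ▸ hm), by omega⟩

theorem exists_eq_append_map_range_of_snoc {α : Type*} [Nonempty α] (R : α → α → Prop)
    (f : ℕ → List α) (n : ℕ)
    (h : ∀ j < n, ∃ x y, (f j).getLast? = some y ∧ f (j + 1) = f j ++ [x] ∧ R y x) :
    ∃ x : ℕ → α, (∀ j ≤ n, f j = f 0 ++ (List.range j).map (fun i => x (i + 1))) ∧
      (∀ e, (f 0).getLast? = some e → 1 ≤ n → R e (x 1)) ∧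
      ∀ i, 1 ≤ i → i < n → R (x i) (x (i + 1)) := by
  have h' : ∀ j, ∃ x, j < n →
      ∃ y, (f j).getLast? = some y ∧ f (j + 1) = f j ++ [x] ∧ R y x :=
    fun j => (em (j < n)).elim (fun hj => (h j hj).imp fun _ hx _ => hx)
      fun hj => ⟨Classical.arbitrary α, (absurd · hj)⟩
  choose x y hy hsnoc hR using h'
  refine ⟨fun i => x (i - 1), fun j hj => ?_, fun e he hn => ?_, fun i hi hin => ?_⟩
  · induction j with
    | zero => simp
    | succ j ih => simp [hsnoc j hj, ih (by omega), List.range_succ]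
  · exact Option.some_injective _ (he.symm.trans (hy 0 hn)) ▸ hR 0 hn
  · obtain ⟨i, rfl⟩ : ∃ i', i = i' + 1 := ⟨i - 1, by omega⟩
    have hlast := hy (i + 1) hin
    rw [hsnoc i (by omega), List.getLast?_concat] at hlast
    simpa [Option.some_injective _ hlast] using hR (i + 1) hin

theorem unravStep.snoc_of_snoc {A Ω : Type} {M : SKModel A Ω} {w : Ω} {s t u : List Ω}
    (hst : ∃ x y, s.getLast? = some y ∧ t = s ++ [x] ∧ M.rel y x) (htu : unravStep M w t u)
    (hsu : s ≠ u) : ∃ x y, t.getLast? = some y ∧ u = t ++ [x] ∧ M.rel y x := by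
  obtain ⟨x, -, -, hst, -⟩ := hst
  refine htu.2.2.resolve_right ?_
  rintro ⟨x', y, -, htu, -⟩
  exact hsu (List.append_inj' (hst.symm.trans htu) rfl).1

/-- Lemma 3.3. Let `(M,w)` be a pointed `Θ`-model, `k > 0`,
and let `α₁,…,α_k ∈ W^un_w` be pairwise distinct with `α_i ρ^un_w α_{i+1}`
for all `i < k`. Then there are `m, n ≥ 0` with `k = m + n + 1` and sequences
`v₁,…,v_m`, `u₁,…,u_n` in `W` with
`v_m ≺ … ≺ v₁ ≺ end(α_{m+1}) ≺ u₁ ≺ … ≺ u_n`, such that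
`α_i = α_{m+1} ⌢ (v₁,…,v_{m−i+1})` for `1 ≤ i ≤ m` and
`α_{m+1+i} = α_{m+1} ⌢ (u₁,…,u_i)` for `1 ≤ i ≤ n`. -/
theorem bil_rho_chain (A : Type) (Ω : Type) (M : SKModel A Ω) (w : Ω)
    (k : ℕ) (hk : 0 < k) (as : ℕ → List Ω)
    (hmem : ∀ i, 1 ≤ i → i ≤ k → as i ∈ unravDom M w)
    (hdist : ∀ i j, 1 ≤ i → i < j → j ≤ k → as i ≠ as j)
    (hstep : ∀ i, 1 ≤ i → i < k → unravStep M w (as i) (as (i + 1))) :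
    ∃ m n : ℕ, k = m + n + 1 ∧
      ∃ vs us : ℕ → Ω,
        (∀ i, 1 ≤ i → i < m → M.rel (vs (i + 1)) (vs i)) ∧
        (∃ e, (as (m + 1)).getLast? = some e ∧
          (1 ≤ m → M.rel (vs 1) e) ∧ (1 ≤ n → M.rel e (us 1))) ∧
        (∀ i, 1 ≤ i → i < n → M.rel (us i) (us (i + 1))) ∧
        (∀ i, 1 ≤ i → i ≤ m →
          as i = as (m + 1) ++ (List.range (m - i + 1)).map (fun j => vs (j + 1))) ∧
        (∀ i, 1 ≤ i → i ≤ n →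
          as (m + 1 + i) = as (m + 1) ++ (List.range i).map (fun j => us (j + 1))) := by
  have : Nonempty Ω := ⟨M.nonempty.some⟩
  obtain ⟨m, hmk, hback, hfwd⟩ := exists_split_of_succ_closed
    (fun i => ∃ x y, (as (i + 1)).getLast? = some y ∧ as (i + 2) = as (i + 1) ++ [x] ∧
      M.rel y x) (k - 1) fun i hi hext => unravStep.snoc_of_snoc hext
        (hstep (i + 2) (by omega) (by omega))
        (hdist (i + 1) (i + 3) (by omega) (by omega) (by omega))
  obtain ⟨vs, hv_eq, hv_end, hv_rel⟩ := exists_eq_append_map_range_of_snoc (flip M.rel)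
      (fun j => as (m + 1 - j)) m fun j hj => by
    obtain ⟨i, rfl⟩ : ∃ i, m = i + j + 1 := ⟨m - j - 1, by omega⟩
    rw [show i + j + 1 + 1 - j = i + 2 by omega, show i + j + 1 + 1 - (j + 1) = i + 1 by omega]
    exact (hstep (i + 1) (by omega) (by omega)).2.2.resolve_left (hback i (by omega))
  obtain ⟨us, hu_eq, hu_end, hu_rel⟩ := exists_eq_append_map_range_of_snoc M.rel
      (fun j => as (m + 1 + j)) (k - 1 - m) fun j hj => by
    simpa only [show m + 1 + j = m + j + 1 by omega, show m + 1 + (j + 1) = m + j + 2 by omega]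
      using hfwd (m + j) (by omega) (by omega)
  obtain ⟨e, he⟩ : ∃ e, (as (m + 1)).getLast? = some e :=
    Option.isSome_iff_exists.1 (List.getLast?_isSome.2 (hmem (m + 1) (by omega) (by omega)).1)
  refine ⟨m, k - 1 - m, by omega, vs, us, hv_rel, ⟨e, he, hv_end e (by simpa using he),
    hu_end e (by simpa using he)⟩, hu_rel, fun i hi₁ hi => ?_,
    fun i _ hi => by simpa using hu_eq i hi⟩
  have h := hv_eq (m + 1 - i) (by omega)
  beta_reduce at h
  rwa [show m + 1 - (m + 1 - i) = i by omega, show m + 1 - i = m - i + 1 by omega,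
    Nat.sub_zero] at h
end

section
/- Let (M,w) be a pointed Θ-model and let α, β ∈ W^un_w with α ≺^un_w β. Then there exist γ ∈ W^un_w, m, n ≥ 0 and sequences v₁,…,v_m and u₁,…,u_n in W such that v_m ≺ … ≺ v₁ ≺ end(γ) ≺ u₁ ≺ … ≺ u_n, α = γ⌢(v₁,…,v_m) and β = γ⌢(u₁,…,u_n). -/
/-! Induct along a path of one-letter extensions and retractions from `α` to `β`,
keeping `α = γ ⌢ vs` with `vs` descending from `end(γ)` and `β = γ ⌢ us` with `us` ascending.
An extension of `β` appends to `us`; a retraction removes the last letter of `us`, or, once `us`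
is empty, removes the last letter of `γ` and prepends it to `vs`. -/

namespace List

variable {α : Type*}

theorem getLast?_append_of_getLast?_eq {l l' : List α} {e : α} (h : l.getLast? = some e) :
    (l ++ l').getLast? = (e :: l').getLast? := by
  rw [getLast?_append, h, getLast?_cons]
  cases l'.getLast? <;> rfl

theorem IsChain.rel_getD {R : α → α → Prop} {l : List α} (h : l.IsChain R) (d : α) {i : ℕ}
    (hi : i + 1 < l.length) : R (l.getD i d) (l.getD (i + 1) d) := by
  rw [getD_eq_getElem _ _ (by omega), getD_eq_getElem _ _ hi]
  exact h.getElem i hi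

theorem map_range_length_getD (l : List α) (d : α) :
    (range l.length).map (fun j => l.getD j d) = l := by
  apply ext_getElem <;> simp +contextual

end List

section Unravelling

variable {A Ω : Type} {M : SKModel A Ω} {w : Ω}

def UnravFork (M : SKModel A Ω) (w : Ω) (α β : List Ω) : Prop :=
  ∃ γ ∈ unravDom M w, ∃ e vs us, γ.getLast? = some e ∧
    (e :: vs).IsChain (flip M.rel) ∧ (e :: us).IsChain M.rel ∧ α = γ ++ vs ∧ β = γ ++ us

theorem unravFork_refl {α : List Ω} (hα : α ∈ unravDom M w) : UnravFork M w α α :=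
  ⟨α, hα, α.getLast hα.1, [], [], List.getLast?_eq_some_getLast hα.1, .singleton _, .singleton _,
    by simp, by simp⟩

theorem UnravFork.snoc {α β : List Ω} {x y : Ω} (h : UnravFork M w α β)
    (hy : β.getLast? = some y) (hyx : M.rel y x) : UnravFork M w α (β ++ [x]) := by
  obtain ⟨γ, hγ, e, vs, us, he, hvs, hus, rfl, rfl⟩ := h
  rw [List.getLast?_append_of_getLast?_eq he] at hy
  refine ⟨γ, hγ, e, vs, us ++ [x], he, hvs, ?_, rfl, by simp⟩
  rw [← List.cons_append]
  exact hus.append (.singleton x) (by simpa [hy] using hyx)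

theorem UnravFork.of_snoc {α c : List Ω} {x y : Ω} (h : UnravFork M w α (c ++ [x]))
    (hc : c ∈ unravDom M w) (hy : c.getLast? = some y) (hxy : M.rel x y) :
    UnravFork M w α c := by
  obtain ⟨γ, hγ, e, vs, us, he, hvs, hus, rfl, hβ⟩ := h
  rcases us.eq_nil_or_concat with rfl | ⟨us, z, rfl⟩
  · obtain rfl : γ = c ++ [x] := by simpa using hβ.symm
    obtain rfl : x = e := by simpa using he
    exact ⟨c, hc, y, x :: vs, [], hy, List.isChain_cons_cons.2 ⟨hxy, hvs⟩, .singleton y,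
      by simp, by simp⟩
  · rw [List.concat_eq_append, ← List.append_assoc] at hβ
    obtain rfl : c = γ ++ us := List.append_inj_left' hβ rfl
    rw [List.concat_eq_append, ← List.cons_append] at hus
    exact ⟨γ, hγ, e, vs, us, he, hvs, hus.left_of_append, rfl, rfl⟩

theorem unravFork_of_unravRel {α β : List Ω} (hα : α ∈ unravDom M w) (h : unravRel M w α β) :
    UnravFork M w α β := by
  induction h with
  | refl => exact unravFork_refl hα
  | tail _ step ih =>
    obtain ⟨-, hc, ⟨x, y, hy, rfl, hyx⟩ | ⟨x, y, hy, rfl, hxy⟩⟩ := step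
    · exact ih.snoc hy hyx
    · exact ih.of_snoc hc hy hxy

end Unravelling

theorem bil_prec_decomposition_general (A : Type) (Ω : Type) (M : SKModel A Ω) (w : Ω)
    (α β : List Ω) (hα : α ∈ unravDom M w)
    (hab : unravRel M w α β) :
    ∃ γ ∈ unravDom M w, ∃ m n : ℕ, ∃ vs us : ℕ → Ω,
      (∀ i, 1 ≤ i → i < m → M.rel (vs (i + 1)) (vs i)) ∧
      (∃ e, γ.getLast? = some e ∧
        (1 ≤ m → M.rel (vs 1) e) ∧ (1 ≤ n → M.rel e (us 1))) ∧
      (∀ i, 1 ≤ i → i < n → M.rel (us i) (us (i + 1))) ∧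
      α = γ ++ (List.range m).map (fun j => vs (j + 1)) ∧
      β = γ ++ (List.range n).map (fun j => us (j + 1)) := by
  obtain ⟨γ, hγ, e, vs, us, he, hvs, hus, rfl, rfl⟩ := unravFork_of_unravRel hα hab
  -- index `0` of both sequences is `end(γ)`, so the paper's `v₁, u₁` sit at index `1`
  refine ⟨γ, hγ, vs.length, us.length, fun i => (e :: vs).getD i e, fun i => (e :: us).getD i e,
    fun i _ hi => hvs.rel_getD e (by simpa using hi),
    ⟨e, he, fun hm => hvs.rel_getD e (i := 0) (Nat.succ_le_succ hm),
      fun hn => hus.rel_getD e (i := 0) (Nat.succ_le_succ hn)⟩,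
    fun i _ hi => hus.rel_getD e (by simpa using hi), ?_, ?_⟩ <;>
  simp only [List.getD_cons_succ, List.map_range_length_getD]

/-- Lemma 3.4. Let `(M,w)` be a pointed `Θ`-model and
`α, β ∈ W^un_w` with `α ≺^un_w β`. Then there are `γ ∈ W^un_w`, `m, n ≥ 0`
and sequences `v₁,…,v_m`, `u₁,…,u_n` in `W` with
`v_m ≺ … ≺ v₁ ≺ end(γ) ≺ u₁ ≺ … ≺ u_n`, `α = γ ⌢ (v₁,…,v_m)` and
`β = γ ⌢ (u₁,…,u_n)`. -/
theorem bil_prec_decomposition (A : Type) (Ω : Type) (M : SKModel A Ω) (w : Ω)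
    (α β : List Ω) (hα : α ∈ unravDom M w) (hβ : β ∈ unravDom M w)
    (hab : unravRel M w α β) :
    ∃ γ ∈ unravDom M w, ∃ m n : ℕ, ∃ vs us : ℕ → Ω,
      (∀ i, 1 ≤ i → i < m → M.rel (vs (i + 1)) (vs i)) ∧
      (∃ e, γ.getLast? = some e ∧
        (1 ≤ m → M.rel (vs 1) e) ∧ (1 ≤ n → M.rel e (us 1))) ∧
      (∀ i, 1 ≤ i → i < n → M.rel (us i) (us (i + 1))) ∧
      α = γ ++ (List.range m).map (fun j => vs (j + 1)) ∧
      β = γ ++ (List.range n).map (fun j => us (j + 1)) :=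
  bil_prec_decomposition_general A Ω M w α β hα hab
end

section
/- For every pointed Θ-model (M,w), the bi-unravelling M^un_w = (W^un_w, ≺^un_w, V^un_w) is itself a Θ-model: the relation ≺^un_w is a partial order (reflexive, transitive, and antisymmetric) on W^un_w, and the valuation V^un_w is monotone with respect to ≺^un_w (if α ≺^un_w β and α ∈ V^un_w(p) then β ∈ V^un_w(p)). -/
/-! Give a sequence the height "number of consecutive pairs going up in `≺` minus the number
of the others". A `ρ^un_w`-step that appends an element going up raises it by one, and so does a
step that deletes a last element lying below its predecessor, since by antisymmetry of `≺` and
distinctness of neighbours that pair did not go up. A height raised by every step makes the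
reflexive-transitive closure antisymmetric. The valuation is monotone because every step moves
the last element up along `≺`. -/

namespace Relation

variable {α β : Type*} {r : α → α → Prop} {a b : α}

theorem ReflTransGen.le_of_step_le [Preorder β] {f : α → β} (hf : ∀ x y, r x y → f x ≤ f y)
    (h : ReflTransGen r a b) : f a ≤ f b := by
  simpa only [reflTransGen_eq_self] using ReflTransGen.lift f hf a b h

theorem ReflTransGen.antisymm_of_step_lt [Preorder β] {f : α → β}
    (hf : ∀ x y, r x y → f x < f y) (hab : ReflTransGen r a b) (hba : ReflTransGen r b a) :
    a = b := by
  obtain rfl | ⟨c, hac, hcb⟩ := hab.cases_head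
  · rfl
  · have hca : f c ≤ f a := (hcb.trans hba).le_of_step_le fun x y h ↦ (hf x y h).le
    exact absurd ((hf a c hac).trans_le hca) (lt_irrefl _)

end Relation

open Classical in
noncomputable def relHeight {α : Type*} (r : α → α → Prop) : List α → ℤ
  | [] => 0
  | [_] => 0
  | a :: b :: l => (if r a b then 1 else -1) + relHeight r (b :: l)

open Classical in
theorem relHeight_append_singleton {α : Type*} (r : α → α → Prop) {l : List α} {b : α}
    (hb : l.getLast? = some b) (a : α) :
    relHeight r (l ++ [a]) = relHeight r l + if r b a then 1 else -1 := by
  induction l with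
  | nil => simp at hb
  | cons c l ih =>
    cases l with
    | nil =>
      obtain rfl : c = b := by simpa using hb
      simp [relHeight]
    | cons d l =>
      rw [List.getLast?_cons_cons] at hb
      rw [List.cons_append, List.cons_append, relHeight, ← List.cons_append, ih hb, relHeight]
      ring

section Unravelling

variable {A Ω : Type} {M : SKModel A Ω} {w : Ω} {s t : List Ω}

theorem unravStep_relHeight (h : unravStep M w s t) :
    relHeight M.rel t = relHeight M.rel s + 1 := by
  obtain ⟨hs, -, ⟨x, y, hy, rfl, hyx⟩ | ⟨x, y, hy, rfl, hxy⟩⟩ := h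
  · simp [relHeight_append_singleton M.rel hy, hyx]
  · have hne : y ≠ x := ((List.isChain_append.1 hs.2.2.2).2.2 y (by simp [hy]) x (by simp)).2
    have hyx : ¬ M.rel y x := fun hyx ↦ hne (M.rel_antisymm hyx hxy)
    simp [relHeight_append_singleton M.rel hy, hyx]

theorem unravStep_getLast? (h : unravStep M w s t) :
    ∃ a b, s.getLast? = some a ∧ t.getLast? = some b ∧ M.rel a b := by
  obtain ⟨-, -, ⟨x, y, hy, rfl, hyx⟩ | ⟨x, y, hy, rfl, hxy⟩⟩ := h
  · exact ⟨y, x, hy, by simp, hyx⟩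
  · exact ⟨x, y, by simp, hy, hxy⟩

theorem unravRel_antisymm (hst : unravRel M w s t) (hts : unravRel M w t s) : s = t :=
  Relation.ReflTransGen.antisymm_of_step_lt
    (fun _ _ h ↦ (unravStep_relHeight h).symm ▸ lt_add_one _) hst hts

theorem unravVal_mono (p : A) (hst : unravRel M w s t) (hs : s ∈ unravVal M w p) :
    t ∈ unravVal M w p := by
  induction hst with
  | refl => exact hs
  | tail _ hstep ih =>
    obtain ⟨-, y, hy, hyp⟩ := ih
    obtain ⟨a, b, ha, hb, hab⟩ := unravStep_getLast? hstep
    obtain rfl : y = a := Option.some.inj (hy.symm.trans ha)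
    exact ⟨hstep.2.1, b, hb, M.val_mono p hab hyp⟩

end Unravelling

theorem bil_unravelling_is_model_general (A : Type) (Ω : Type) (M : SKModel A Ω)
    (w : Ω) :
    (∀ α ∈ unravDom M w, unravRel M w α α) ∧
    (∀ α β γ : List Ω, unravRel M w α β → unravRel M w β γ → unravRel M w α γ) ∧
    (∀ α ∈ unravDom M w, ∀ β ∈ unravDom M w,
      unravRel M w α β → unravRel M w β α → α = β) ∧
    (∀ p : A, ∀ α ∈ unravVal M w p, ∀ β ∈ unravDom M w,
      unravRel M w α β → β ∈ unravVal M w p) :=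
  ⟨fun _ _ ↦ Relation.ReflTransGen.refl,
    fun _ _ _ ↦ Relation.ReflTransGen.trans,
    fun _ _ _ _ ↦ unravRel_antisymm,
    fun p _ hα _ _ hαβ ↦ unravVal_mono p hαβ hα⟩

/-- Lemma 3.5. For every pointed `Θ`-model `(M,w)`, the
bi-unravelling `M^un_w = (W^un_w, ≺^un_w, V^un_w)` is itself a `Θ`-model:
`≺^un_w` is reflexive, transitive and antisymmetric on `W^un_w`, and the
valuation `V^un_w` is monotone with respect to `≺^un_w`. -/
theorem bil_unravelling_is_model (A : Type) (Ω : Type) (M : SKModel A Ω)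
    (w : Ω) (hw : w ∈ M.dom) :
    (∀ α ∈ unravDom M w, unravRel M w α α) ∧
    (∀ α β γ : List Ω, unravRel M w α β → unravRel M w β γ → unravRel M w α γ) ∧
    (∀ α ∈ unravDom M w, ∀ β ∈ unravDom M w,
      unravRel M w α β → unravRel M w β α → α = β) ∧
    (∀ p : A, ∀ α ∈ unravVal M w p, ∀ β ∈ unravDom M w,
      unravRel M w α β → β ∈ unravVal M w p) :=
  bil_unravelling_is_model_general A Ω M w
end

section
/- Let (M,w) be a pointed Θ-model. Then the relation B := {(wₙ, w̄ₙ), (w̄ₙ, wₙ) : w̄ₙ ∈ W^un_w}, which relates each sequence of the bi-unravelling with its last element in both directions, is a bi-asimulation from (M^un_w, w) to (M, w) and also a bi-asimulation from (M, w) to (M^un_w, w). -/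
/-! Sending a sequence of the bi-unravelling to its last element is a bisimulation for both
`≺` and `≻`: a step of `M` is lifted by appending its target to the sequence (or by staying put
when the step is trivial), and a step of the unravelling projects to a step of `M` because each
`ρ^un_w`-step does. A relation that is a bisimulation in both directions is, together with its
converse, a bi-asimulation either way. -/

structure IsBiBisim {A Ω₁ Ω₂ : Type} (M₁ : SKModel A Ω₁) (M₂ : SKModel A Ω₂)
    (R : Ω₁ → Ω₂ → Prop) : Prop where
  mem : ∀ {v s}, R v s → v ∈ M₁.dom ∧ s ∈ M₂.dom
  mem_val_iff : ∀ p {v s}, R v s → (v ∈ M₁.val p ↔ s ∈ M₂.val p)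
  forth_up : ∀ {v s v'}, R v s → M₁.rel v v' → ∃ s', M₂.rel s s' ∧ R v' s'
  back_up : ∀ {v s s'}, R v s → M₂.rel s s' → ∃ v', M₁.rel v v' ∧ R v' s'
  forth_down : ∀ {v s v'}, R v s → M₁.rel v' v → ∃ s', M₂.rel s' s ∧ R v' s'
  back_down : ∀ {v s s'}, R v s → M₂.rel s' s → ∃ v', M₁.rel v' v ∧ R v' s'

namespace IsBiBisim

variable {A Ω₁ Ω₂ : Type} {M₁ : SKModel A Ω₁} {M₂ : SKModel A Ω₂} {R : Ω₁ → Ω₂ → Prop}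

theorem symm (h : IsBiBisim M₁ M₂ R) : IsBiBisim M₂ M₁ (flip R) where
  mem hvs := (h.mem hvs).symm
  mem_val_iff p _ _ hvs := (h.mem_val_iff p hvs).symm
  forth_up := h.back_up
  back_up := h.forth_up
  forth_down := h.back_down
  back_down := h.forth_down

theorem isBiAsim (h : IsBiBisim M₁ M₂ R) (Θ : Set A) {w₁ : Ω₁} {w₂ : Ω₂} (hw : R w₁ w₂) :
    IsBiAsim Θ M₁ M₂ w₁ w₂ R (flip R) where
  memR := h.mem
  memS hvs := (h.mem hvs).symm
  elem := hw
  atomR p _ _ _ hvs := (h.mem_val_iff p hvs).1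
  atomS p _ _ _ hvs := (h.mem_val_iff p hvs).2
  backR hvs hst := let ⟨u, hvu, hut⟩ := h.back_up hvs hst; ⟨u, hvu, hut, hut⟩
  backS hsv hst := let ⟨u, hvu, htu⟩ := h.forth_up hsv hst; ⟨u, hvu, htu, htu⟩
  forthR hvs huv := let ⟨t, hts, hut⟩ := h.forth_down hvs huv; ⟨t, hts, hut, hut⟩
  forthS hsv huv := let ⟨t, hts, htu⟩ := h.back_down hsv huv; ⟨t, hts, htu, htu⟩

end IsBiBisim

def unravLast {A Ω : Type} (M : SKModel A Ω) (w : Ω) (α : List Ω) (x : Ω) : Prop :=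
  α ∈ unravDom M w ∧ α.getLast? = some x

section Unravelling

variable {A Ω : Type} {M : SKModel A Ω} {w : Ω}

theorem unravLast_singleton (hw : w ∈ M.dom) : unravLast M w [w] w :=
  ⟨⟨List.cons_ne_nil w [], rfl, by simpa using hw, List.isChain_singleton w⟩, rfl⟩

theorem exists_unravLast {α : List Ω} (hα : α ∈ unravDom M w) : ∃ x, unravLast M w α x :=
  ⟨α.getLast hα.1, hα, List.getLast?_eq_some_getLast hα.1⟩

namespace unravLast

variable {α β : List Ω} {x y : Ω}

theorem mem_dom (h : unravLast M w α x) : x ∈ M.dom :=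
  h.1.2.2.1 x (List.mem_of_getLast? h.2)

theorem append (h : unravLast M w α x) (hy : y ∈ M.dom) (hxy : M.rel x y ∨ M.rel y x)
    (hne : x ≠ y) : unravLast M w (α ++ [y]) y := by
  obtain ⟨⟨hα, hhead, hmem, hchain⟩, hlast⟩ := h
  refine ⟨⟨by simp, by rwa [List.head?_append_of_ne_nil α hα], ?_, ?_⟩, by simp⟩
  · simpa [or_imp, forall_and] using ⟨hmem, hy⟩
  · refine List.isChain_append.2 ⟨hchain, List.isChain_singleton y, ?_⟩
    rintro a ha b hb
    rw [hlast, Option.mem_some_iff] at ha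
    simp only [List.head?_cons, Option.mem_some_iff] at hb
    subst ha hb
    exact ⟨hxy, hne⟩

theorem exists_of_unravStep (h : unravLast M w α x) (hαβ : unravStep M w α β) :
    ∃ y, M.rel x y ∧ unravLast M w β y := by
  obtain ⟨-, hβ, ⟨z, y', hy', rfl, hyz⟩ | ⟨z, y', hy', rfl, hzy⟩⟩ := hαβ
  · obtain rfl : y' = x := Option.some_injective _ (hy'.symm.trans h.2)
    exact ⟨z, hyz, hβ, by simp⟩
  · obtain rfl : z = x := by simpa using h.2
    exact ⟨y', hzy, hβ, hy'⟩

theorem exists_of_unravRel (h : unravLast M w α x) (hαβ : unravRel M w α β) :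
    ∃ y, M.rel x y ∧ unravLast M w β y := by
  induction hαβ with
  | refl => exact ⟨x, M.rel_refl x h.mem_dom, h⟩
  | tail _ hstep ih =>
    obtain ⟨y, hxy, hy⟩ := ih
    obtain ⟨z, hyz, hz⟩ := hy.exists_of_unravStep hstep
    exact ⟨z, M.rel_trans hxy hyz, hz⟩

theorem exists_up (h : unravLast M w α x) (hxy : M.rel x y) :
    ∃ β, unravRel M w α β ∧ unravLast M w β y := by
  by_cases hne : x = y
  · exact ⟨α, .refl, hne ▸ h⟩
  have hβ := h.append (M.rel_mem hxy).2 (.inl hxy) hne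
  exact ⟨α ++ [y], .single ⟨h.1, hβ.1, .inl ⟨y, x, h.2, rfl, hxy⟩⟩, hβ⟩

theorem exists_down (h : unravLast M w α x) (hyx : M.rel y x) :
    ∃ β, unravRel M w β α ∧ unravLast M w β y := by
  by_cases hne : x = y
  · exact ⟨α, .refl, hne ▸ h⟩
  have hβ := h.append (M.rel_mem hyx).1 (.inr hyx) hne
  exact ⟨α ++ [y], .single ⟨hβ.1, h.1, .inr ⟨y, x, h.2, rfl, hyx⟩⟩, hβ⟩

end unravLast

theorem IsUnravelling.isBiBisim_unravLast {U : SKModel A (List Ω)} (hU : IsUnravelling M w U) :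
    IsBiBisim U M (unravLast M w) := by
  obtain ⟨hdom, hrel, hval⟩ := hU
  refine ⟨fun h => ⟨hdom ▸ h.1, h.mem_dom⟩, fun p α x h => ?_, fun h hαβ => ?_,
    fun h hxy => ?_, fun h hβα => ?_, fun h hyx => ?_⟩
  · simp only [hval, unravVal, Set.mem_ofPred_eq, h.2, Option.some.injEq, exists_eq_left',
      h.1, true_and]
  · exact h.exists_of_unravRel ((hrel _ _).1 hαβ).2.2
  · obtain ⟨β, hαβ, hβ⟩ := h.exists_up hxy
    exact ⟨β, (hrel _ _).2 ⟨h.1, hβ.1, hαβ⟩, hβ⟩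
  · obtain ⟨hβ, -, hβα⟩ := (hrel _ _).1 hβα
    obtain ⟨y, hy⟩ := exists_unravLast hβ
    obtain ⟨x', hyx', hx'⟩ := hy.exists_of_unravRel hβα
    obtain rfl := Option.some_injective _ (hx'.2.symm.trans h.2)
    exact ⟨y, hyx', hy⟩
  · obtain ⟨β, hβα, hβ⟩ := h.exists_down hyx
    exact ⟨β, (hrel _ _).2 ⟨hβ.1, h.1, hβα⟩, hβ⟩

end Unravelling

/-- Lemma 3.6(1). Let `(M,w)` be a pointed `Θ`-model and
let `U` be its bi-unravelling `M^un_w`. The relation `B` relating every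
sequence of the bi-unravelling with its last element (in both directions) is
a bi-asimulation from `(M^un_w, (w))` to `(M,w)` and also a bi-asimulation
from `(M,w)` to `(M^un_w, (w))`. -/
theorem bil_unravelling_asimulation (A : Type) (Θ : Set A) (Ω : Type)
    (M : SKModel A Ω) (w : Ω) (hw : w ∈ M.dom)
    (U : SKModel A (List Ω)) (hU : IsUnravelling M w U) :
    IsBiAsim Θ U M [w] w
      (fun α x => α ∈ unravDom M w ∧ α.getLast? = some x)
      (fun x α => α ∈ unravDom M w ∧ α.getLast? = some x) ∧
    IsBiAsim Θ M U w [w]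
      (fun x α => α ∈ unravDom M w ∧ α.getLast? = some x)
      (fun α x => α ∈ unravDom M w ∧ α.getLast? = some x) := by
  have hB := hU.isBiBisim_unravLast
  exact ⟨hB.isBiAsim Θ (unravLast_singleton hw), hB.symm.isBiAsim Θ (unravLast_singleton hw)⟩
end
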